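/- For null geodesics in the Kerr spacetime, the conserved quantity q = k − 2aeℓ − ℓ², where k = K_{ab}γ̇^aγ̇^b is the Carter constant, e the energy and ℓ the azimuthal angular momentum, equals (γ̇_θ)² + cot²θ (γ̇_φ)² + a²sin²θ (γ̇_t)², and is therefore nonnegative. -/

import Mathlib

/-! Put `A = (r² + a²) pₜ + a p_φ`. Since `2Σ/(√2 √Δ √Σ)² = 1/Δ`, the tetrad term of `k` is
`(A + Δ p_r)(A − Δ p_r)/Δ = (A² − Δ² p_r²)/Δ`, and the null condition `Σ g^{ab} p_a p_b = 0`
says exactly `−Δ² p_r² = R(p, p)`. Expanding, the cross terms of `A² + R(p, p)` sum to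
`2a(r² + a² − 2Mr) pₜ p_φ = 2aΔ pₜ p_φ`, so `A² + R(p, p) = Δ (Q(p, p) + 2a pₜ p_φ + p_φ²)`,
whence `k = Q(p, p) + 2a e ℓ + ℓ²`. -/

noncomputable section

open Matrix

/-- The Kerr horizon function `Δ = r² − 2Mr + a²`. -/
def Dk (M a r : ℝ) : ℝ := r^2 - 2*M*r + a^2

/-- `Σ = r² + a²cos²θ`. -/
def Sk (a r θ : ℝ) : ℝ := r^2 + a^2 * Real.cos θ ^ 2

/-- The tensor `R^{αβ} = −(r²+a²)²∂_t∂_t − 4aMr ∂_t∂_φ (symmetrized) + (Δ−a²)∂_φ∂_φ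
+ ΔQ^{αβ}` with `Q^{αβ} = ∂_θ∂_θ + cot²θ ∂_φ∂_φ + a²sin²θ ∂_t∂_t`, in Boyer–Lindquist
coordinates `(t,r,θ,φ)`. -/
def Rmat (M a r θ : ℝ) : Matrix (Fin 4) (Fin 4) ℝ :=
  !![-(r^2 + a^2)^2 + Dk M a r * a^2 * Real.sin θ ^ 2, 0, 0, -2*a*M*r;
     0, 0, 0, 0;
     0, 0, Dk M a r, 0;
     -2*a*M*r, 0, 0, (Dk M a r - a^2) + Dk M a r * (Real.cos θ / Real.sin θ)^2]

/-- The inverse Kerr metric, via the identity `Σ g^{αβ} = −Δ ∂_r∂_r − R^{αβ}/Δ`. -/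
def ginvK (M a r θ : ℝ) : Matrix (Fin 4) (Fin 4) ℝ :=
  (Sk a r θ)⁻¹ • ((-(Dk M a r)) • Matrix.single 1 1 (1 : ℝ)
    - (Dk M a r)⁻¹ • Rmat M a r θ)

section

variable (M a r θ : ℝ) (p : Fin 4 → ℝ)

theorem sum_Rmat_mul :
    ∑ i, ∑ j, Rmat M a r θ i j * p i * p j
      = (-(r^2 + a^2)^2 + Dk M a r * a^2 * Real.sin θ ^ 2) * p 0 ^ 2
        - 4 * a * M * r * p 0 * p 3 + Dk M a r * p 2 ^ 2
        + ((Dk M a r - a^2) + Dk M a r * (Real.cos θ / Real.sin θ)^2) * p 3 ^ 2 := by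
  simp only [Rmat, of_apply, cons_val', cons_val_fin_one, Fin.sum_univ_four, cons_val_zero,
    cons_val_one, cons_val, zero_mul, add_zero, zero_add]
  ring

theorem sum_ginvK_mul :
    ∑ i, ∑ j, ginvK M a r θ i j * p i * p j
      = (Sk a r θ)⁻¹ * (-(Dk M a r) * p 1 ^ 2
          - (Dk M a r)⁻¹ * ∑ i, ∑ j, Rmat M a r θ i j * p i * p j) := by
  simp only [ginvK, neg_smul, smul_single, smul_eq_mul, mul_one, Matrix.smul_apply,
    Matrix.sub_apply, Matrix.neg_apply, single_apply, Fin.sum_univ_four, and_true, and_false,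
    Fin.reduceEq, one_ne_zero, ↓reduceIte, neg_zero, zero_sub]
  ring

theorem sum_Rmat_mul_of_null (hD : Dk M a r ≠ 0) (hS : Sk a r θ ≠ 0)
    (hnull : ∑ i, ∑ j, ginvK M a r θ i j * p i * p j = 0) :
    ∑ i, ∑ j, Rmat M a r θ i j * p i * p j = -(Dk M a r ^ 2 * p 1 ^ 2) := by
  rw [sum_ginvK_mul, mul_eq_zero, or_iff_right (inv_ne_zero hS)] at hnull
  field_simp at hnull
  linear_combination -hnull

theorem sq_add_sum_Rmat_mul :
    ((a^2 + r^2) * p 0 + a * p 3) ^ 2 + ∑ i, ∑ j, Rmat M a r θ i j * p i * p j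
      = Dk M a r * ((p 2)^2 + (Real.cos θ / Real.sin θ)^2 * (p 3)^2
          + a^2 * Real.sin θ ^ 2 * (p 0)^2 + 2 * a * p 0 * p 3 + (p 3)^2) := by
  rw [sum_Rmat_mul, Dk]
  ring

end

theorem two_mul_mul_div_mul_div_sqrt {D S : ℝ} (hD : 0 < D) (hS : 0 < S) (u v : ℝ) :
    2 * S * (u / (Real.sqrt 2 * Real.sqrt D * Real.sqrt S))
      * (v / (Real.sqrt 2 * Real.sqrt D * Real.sqrt S)) = u * v / D := by
  have hc : Real.sqrt 2 * Real.sqrt D * Real.sqrt S ≠ 0 := by positivity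
  field_simp
  rw [Real.sq_sqrt zero_le_two, Real.sq_sqrt hD.le, Real.sq_sqrt hS.le]
  ring

theorem carter_q_sum_of_squares_general (M a r θ : ℝ) (p : Fin 4 → ℝ)
    (hD : 0 < Dk M a r) (hS : 0 < Sk a r θ)
    (hnull : ∑ i, ∑ j, ginvK M a r θ i j * p i * p j = 0) :
    ((2 * Sk a r θ *
        (((a^2 + r^2) * p 0 + Dk M a r * p 1 + a * p 3)
          / (Real.sqrt 2 * Real.sqrt (Dk M a r) * Real.sqrt (Sk a r θ))) *
        (((a^2 + r^2) * p 0 - Dk M a r * p 1 + a * p 3)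
          / (Real.sqrt 2 * Real.sqrt (Dk M a r) * Real.sqrt (Sk a r θ)))
      - r^2 * (∑ i, ∑ j, ginvK M a r θ i j * p i * p j))
      - 2 * a * p 0 * p 3 - (p 3)^2
    = (p 2)^2 + (Real.cos θ / Real.sin θ)^2 * (p 3)^2
        + a^2 * Real.sin θ ^ 2 * (p 0)^2) ∧
    (0 ≤ (p 2)^2 + (Real.cos θ / Real.sin θ)^2 * (p 3)^2
        + a^2 * Real.sin θ ^ 2 * (p 0)^2) := by
  refine ⟨?_, by positivity⟩
  have hR := sum_Rmat_mul_of_null M a r θ p hD.ne' hS.ne' hnull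
  have key := sq_add_sum_Rmat_mul M a r θ p
  rw [hnull, two_mul_mul_div_mul_div_sqrt hD hS]
  field_simp
  linear_combination key - hR

/-- For a null geodesic in Kerr with covelocity `p = γ̇_a` (so `e = p_t`, `ℓ_z = p_φ`),
Carter's constant is `k = K_{ab}γ̇^aγ̇^b = 2Σ(l^aγ̇_a)(n^bγ̇_b) − r²g(γ̇,γ̇)` with the
Carter tetrad `l, n`.  The quantity `q = k − 2aeℓ_z − ℓ_z²` equals
`γ̇_θ² + cot²θ γ̇_φ² + a²sin²θ γ̇_t²`, and is therefore nonnegative. -/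
theorem carter_q_sum_of_squares (M a r θ : ℝ) (p : Fin 4 → ℝ)
    (hD : 0 < Dk M a r) (hS : 0 < Sk a r θ) (hs : Real.sin θ ≠ 0)
    (hnull : ∑ i, ∑ j, ginvK M a r θ i j * p i * p j = 0) :
    ((2 * Sk a r θ *
        (((a^2 + r^2) * p 0 + Dk M a r * p 1 + a * p 3)
          / (Real.sqrt 2 * Real.sqrt (Dk M a r) * Real.sqrt (Sk a r θ))) *
        (((a^2 + r^2) * p 0 - Dk M a r * p 1 + a * p 3)
          / (Real.sqrt 2 * Real.sqrt (Dk M a r) * Real.sqrt (Sk a r θ)))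
      - r^2 * (∑ i, ∑ j, ginvK M a r θ i j * p i * p j))
      - 2 * a * p 0 * p 3 - (p 3)^2
    = (p 2)^2 + (Real.cos θ / Real.sin θ)^2 * (p 3)^2
        + a^2 * Real.sin θ ^ 2 * (p 0)^2) ∧
    (0 ≤ (p 2)^2 + (Real.cos θ / Real.sin θ)^2 * (p 3)^2
        + a^2 * Real.sin θ ^ 2 * (p 0)^2) :=
  carter_q_sum_of_squares_general M a r θ p hD hS hnull
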